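/- arXiv:1203.6610 — 2 statements merged into one kernel-verified Lean document; each statement's English description precedes it below -/
import Mathlib

section
/- In the monopoly setting, there exists a revenue-maximizing partition π such that SW(π) ≥ (1/2)·OPT, where OPT := max_{π'} SW(π') over all partitions π' of G. -/
/-!
Among the revenue-maximizing partitions take one of maximal welfare. In each of its blocks every
demanded good is valued by the top buyer or by the runner-up of the block: otherwise moving that
good into a block of its own would keep both of their values, hence the revenue, and raise the
welfare by one. So the number of demanded goods is at most `∑ (V̄1 + V̄2) ≤ 2 ∑ V̄1`, while no
partition has welfare above the number of demanded goods.
-/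

open Finset

variable {B G S : Type*} [Fintype B] [Fintype G] [Fintype S]
variable [DecidableEq B] [DecidableEq G] [DecidableEq S]

/-- `v_b(Ḡ)`: buyer `b`'s total valuation of the variants in `Ḡ`. -/
def vsum (v : B → G → ℕ) (b : B) (Gb : Finset G) : ℕ := ∑ g ∈ Gb, v b g

/-- `V̄1(B̄,Ḡ)`: the largest value among `(v_b(Ḡ))_{b∈B̄}` (`0` if `B̄ = ∅`). -/
def V1 (v : B → G → ℕ) (Bb : Finset B) (Gb : Finset G) : ℕ :=
  Bb.sup (fun b => vsum v b Gb)

/-- `V̄2(B̄,Ḡ)`: the second-largest value, counted with multiplicity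
(`0` if `|B̄| ≤ 1`).  It equals the minimum, over removal of one buyer,
of the maximum over the remaining buyers. -/
def V2 (v : B → G → ℕ) (Bb : Finset B) (Gb : Finset G) : ℕ :=
  if h : Bb.Nonempty then Bb.inf' h (fun b => V1 v (Bb.erase b) Gb) else 0

/-- The set of buyers choosing seller `s` under the assignment `σ`. -/
def buyersOf (σ : B → S) (s : S) : Finset B := univ.filter (fun b => σ b = s)

/-- Buyer `b`'s utility in the multi-seller game. -/
def ubuyer (v : B → G → ℕ) (τ : S → Finpartition (univ : Finset G)) (σ : B → S) (b : B) : ℚ :=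
  (Fintype.card G : ℚ)⁻¹ *
    ∑ Gb ∈ (τ (σ b)).parts, max ((vsum v b Gb : ℚ) - (V2 v (buyersOf σ (σ b)) Gb : ℚ)) 0

/-- Seller `s`'s utility in the multi-seller game. -/
def useller (v : B → G → ℕ) (τ : S → Finpartition (univ : Finset G)) (σ : B → S) (s : S) : ℚ :=
  (Fintype.card G : ℚ)⁻¹ * ∑ Gb ∈ (τ s).parts, (V2 v (buyersOf σ s) Gb : ℚ)

/-- Social welfare in the multi-seller game. -/
def SWm (v : B → G → ℕ) (τ : S → Finpartition (univ : Finset G)) (σ : B → S) : ℚ :=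
  ((Fintype.card S : ℚ) * (Fintype.card G : ℚ))⁻¹ *
    ∑ s : S, ∑ Gb ∈ (τ s).parts, (V1 v (buyersOf σ s) Gb : ℚ)

/-- Social welfare in the single-seller (monopoly) game. -/
def SW1 (v : B → G → ℕ) (π : Finpartition (univ : Finset G)) : ℚ :=
  (Fintype.card G : ℚ)⁻¹ * ∑ Gb ∈ π.parts, (V1 v (univ : Finset B) Gb : ℚ)

/-- The monopolist's revenue. -/
def rev1 (v : B → G → ℕ) (π : Finpartition (univ : Finset G)) : ℚ :=
  (Fintype.card G : ℚ)⁻¹ * ∑ Gb ∈ π.parts, (V2 v (univ : Finset B) Gb : ℚ)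

/-- Buyer `b`'s utility in the monopoly game. -/
def ub1 (v : B → G → ℕ) (π : Finpartition (univ : Finset G)) (b : B) : ℚ :=
  (Fintype.card G : ℚ)⁻¹ *
    ∑ Gb ∈ π.parts, max ((vsum v b Gb : ℚ) - (V2 v (univ : Finset B) Gb : ℚ)) 0

/-- `π` refines `π̂`: every block of `π̂` is a union of blocks of `π`. -/
def IsRefinement (π πhat : Finpartition (univ : Finset G)) : Prop :=
  ∀ t ∈ πhat.parts, ∃ P ⊆ π.parts, t = P.sup id

/-- `σ` is a (pure) Nash equilibrium of the buyers' subgame induced by `τ`. -/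
def IsNash (v : B → G → ℕ) (τ : S → Finpartition (univ : Finset G)) (σ : B → S) : Prop :=
  ∀ (b : B) (s : S), ubuyer v τ (Function.update σ b s) b ≤ ubuyer v τ σ b

/-- `p^i(G)`: the number of goods demanded by at least `i` buyers. -/
def pdem (v : B → G → ℕ) (i : ℕ) : ℕ :=
  (univ.filter (fun g : G => i ≤ ∑ b : B, v b g)).card

/-- The trivial (indiscrete) partition `{G}`, which discloses nothing. -/
def trivPart (G : Type*) [Fintype G] [DecidableEq G] [Nonempty G] :
    Finpartition (univ : Finset G) :=
  Finpartition.indiscrete Finset.univ_nonempty.ne_empty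

/-- `(π, f)` is a pure subgame perfect equilibrium of the two-stage game. -/
def IsSPE (v : B → G → ℕ) (π : S → Finpartition (univ : Finset G))
    (f : (S → Finpartition (univ : Finset G)) → (B → S)) : Prop :=
  (∀ τ, IsNash v τ (f τ)) ∧
  ∀ (s : S) (ρ : Finpartition (univ : Finset G)),
    useller v (Function.update π s ρ) (f (Function.update π s ρ)) s ≤ useller v π (f π) s

namespace Finpartition

variable {α : Type*} [DecidableEq α]

section Lattice

variable [Lattice α] [OrderBot α] [IsModularLattice α] {a T : α}

def refineAt (P : Finpartition a) (T : α) (Q : Finpartition T) : Finpartition a :=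
  P.bind fun i hi => if h : i = T then Q.copy h.symm else indiscrete (P.ne_bot hi)

lemma sum_refineAt {M : Type*} [AddCommMonoid M] (P : Finpartition a) (hT : T ∈ P.parts)
    (Q : Finpartition T) (f : α → M) :
    ∑ p ∈ (P.refineAt T Q).parts, f p + f T = ∑ p ∈ P.parts, f p + ∑ q ∈ Q.parts, f q := by
  have hpart : ∀ i (hi : i ∈ P.parts),
      ∑ p ∈ (if h : i = T then Q.copy h.symm else indiscrete (P.ne_bot hi)).parts, f p
        = if i = T then ∑ q ∈ Q.parts, f q else f i := by
    intro i hi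
    split_ifs with h
    · subst h; rfl
    · simp [indiscrete]
  rw [refineAt, bind, copy_parts, sum_combine, sum_congr rfl fun i _ => hpart i.1 i.2,
    sum_attach P.parts fun i => if i = T then ∑ q ∈ Q.parts, f q else f i,
    ← add_sum_erase _ _ hT, ← add_sum_erase _ _ hT, if_pos rfl,
    sum_congr rfl fun i hi => if_neg (ne_of_mem_erase hi)]
  abel

end Lattice

variable {s T : Finset α} {u : α}

lemma sum_sum_parts {M : Type*} [AddCommMonoid M] (P : Finpartition s) (f : α → M) :
    ∑ t ∈ P.parts, ∑ x ∈ t, f x = ∑ x ∈ s, f x := by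
  conv_rhs => rw [← P.biUnion_parts]
  exact (sum_biUnion P.supIndep.pairwiseDisjoint).symm

def splitOff (hu : u ∈ T) (hne : (T.erase u).Nonempty) : Finpartition T :=
  (indiscrete (singleton_ne_empty u)).extend hne.ne_empty
    (disjoint_singleton_left.2 (notMem_erase u T)) (by rw [sup_eq_union, ← insert_eq, insert_erase hu])

lemma sum_splitOff {M : Type*} [AddCommMonoid M] (hu : u ∈ T) (hne : (T.erase u).Nonempty)
    (f : Finset α → M) :
    ∑ q ∈ (splitOff hu hne).parts, f q = f {u} + f (T.erase u) := by
  have hne' : T.erase u ≠ {u} := fun h => notMem_erase u T (h ▸ mem_singleton_self u)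
  simp [splitOff, indiscrete, sum_pair hne', add_comm]

end Finpartition

section Valuations

omit [Fintype B] [Fintype G] [DecidableEq B] [DecidableEq G]

variable (v : B → G → ℕ) {Bb : Finset B} {T : Finset G} {b b' : B} {u : G}

lemma vsum_le_V1 (hb : b ∈ Bb) : vsum v b T ≤ V1 v Bb T :=
  le_sup (f := fun b => vsum v b T) hb

lemma V1_mono_left {Cb : Finset B} (h : Bb ⊆ Cb) : V1 v Bb T ≤ V1 v Cb T :=
  sup_mono h

lemma V1_mono_right {S : Finset G} (h : S ⊆ T) : V1 v Bb S ≤ V1 v Bb T :=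
  sup_mono_fun fun _ _ => sum_le_sum_of_subset h

@[simp]
lemma V1_empty_right : V1 v Bb ∅ = 0 := by
  simp [V1, vsum]

lemma vsum_erase [DecidableEq G] (hu : v b u = 0) : vsum v b (T.erase u) = vsum v b T :=
  sum_erase T hu

lemma V1_le_V1_erase [DecidableEq G] (hb : b ∈ Bb) (htop : V1 v Bb T ≤ vsum v b T)
    (hu : v b u = 0) : V1 v Bb T ≤ V1 v Bb (T.erase u) :=
  calc V1 v Bb T ≤ vsum v b T := htop
    _ = vsum v b (T.erase u) := (vsum_erase v hu).symm
    _ ≤ V1 v Bb (T.erase u) := vsum_le_V1 v hb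

lemma V2_le_V1 [DecidableEq B] : V2 v Bb T ≤ V1 v Bb T := by
  unfold V2
  split_ifs with h
  · obtain ⟨b, hb⟩ := h
    exact (inf'_le _ hb).trans (V1_mono_left v (erase_subset b Bb))
  · exact Nat.zero_le _

lemma V2_eq_V1_erase [DecidableEq B] (hb : b ∈ Bb) (htop : V1 v Bb T ≤ vsum v b T) :
    V2 v Bb T = V1 v (Bb.erase b) T := by
  rw [V2, dif_pos ⟨b, hb⟩]
  refine le_antisymm (inf'_le _ hb) (le_inf' _ _ fun c _ => ?_)
  rcases eq_or_ne c b with rfl | hcb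
  · exact le_rfl
  · calc V1 v (Bb.erase b) T ≤ V1 v Bb T := V1_mono_left v (erase_subset b Bb)
      _ ≤ vsum v b T := htop
      _ ≤ V1 v (Bb.erase c) T := vsum_le_V1 v (mem_erase.2 ⟨hcb.symm, hb⟩)

lemma V2_le_V2_erase [DecidableEq B] [DecidableEq G] (hb : b ∈ Bb)
    (htop : V1 v Bb T ≤ vsum v b T) (hb' : b' ∈ Bb.erase b)
    (htop' : V1 v (Bb.erase b) T ≤ vsum v b' T) (hu : v b u = 0) (hu' : v b' u = 0) :
    V2 v Bb T ≤ V2 v Bb (T.erase u) := by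
  have htop_erase : V1 v Bb (T.erase u) ≤ vsum v b (T.erase u) := by
    rw [vsum_erase v hu]
    exact (V1_mono_right v (erase_subset u T)).trans htop
  rw [V2_eq_V1_erase v hb htop, V2_eq_V1_erase v hb htop_erase]
  exact V1_le_V1_erase v hb' htop' hu'

lemma vsum_eq_card_filter (hb : ∀ g, v b g ≤ 1) (T : Finset G) :
    vsum v b T = #{g ∈ T | v b g ≠ 0} := by
  rw [card_filter]
  exact sum_congr rfl fun g _ => by have := hb g; split_ifs <;> omega

end Valuations

lemma Finite.exists_lex_max {α β γ : Type*} [Finite α] [Nonempty α] [LinearOrder β]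
    [LinearOrder γ] (f : α → β) (g : α → γ) :
    ∃ a, (∀ b, f b ≤ f a) ∧ ∀ b, (∀ c, f c ≤ f b) → g b ≤ g a := by
  obtain ⟨a₀, ha₀⟩ := Finite.exists_max f
  have : Nonempty {a // ∀ b, f b ≤ f a} := ⟨⟨a₀, ha₀⟩⟩
  obtain ⟨⟨a, ha⟩, hmax⟩ := Finite.exists_max fun a : {a // ∀ b, f b ≤ f a} => g a
  exact ⟨a, ha, fun b hb => hmax ⟨b, hb⟩⟩

def demanded (v : B → G → ℕ) (T : Finset G) : Finset G := {g ∈ T | ∃ b, v b g ≠ 0}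

def revenue (v : B → G → ℕ) (π : Finpartition (univ : Finset G)) : ℕ :=
  ∑ T ∈ π.parts, V2 v univ T

def welfare (v : B → G → ℕ) (π : Finpartition (univ : Finset G)) : ℕ :=
  ∑ T ∈ π.parts, V1 v univ T

structure IsDetachable (v : B → G → ℕ) (T : Finset G) (u : G) : Prop where
  mem_demanded : u ∈ demanded v T
  V1_le : V1 v univ T ≤ V1 v univ (T.erase u)
  V2_le : V2 v univ T ≤ V2 v univ (T.erase u)

lemma rev1_eq (v : B → G → ℕ) (π : Finpartition (univ : Finset G)) :
    rev1 v π = (Fintype.card G : ℚ)⁻¹ * revenue v π := by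
  simp [rev1, revenue]

omit [DecidableEq B] in
lemma SW1_eq (v : B → G → ℕ) (π : Finpartition (univ : Finset G)) :
    SW1 v π = (Fintype.card G : ℚ)⁻¹ * welfare v π := by
  simp [SW1, welfare]

omit [DecidableEq B] in
lemma sum_card_demanded (v : B → G → ℕ) (π : Finpartition (univ : Finset G)) :
    ∑ T ∈ π.parts, #(demanded v T) = #(demanded v univ) := by
  simp only [demanded, card_filter]
  exact π.sum_sum_parts _

section

variable {v : B → G → ℕ}

omit [Fintype G] [DecidableEq B] [DecidableEq G] in
lemma V1_le_card_demanded (hv : ∀ b g, v b g ≤ 1) (Bb : Finset B) (T : Finset G) :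
    V1 v Bb T ≤ #(demanded v T) :=
  Finset.sup_le fun b _ => (vsum_eq_card_filter v (hv b) T).trans_le <|
    card_le_card fun g hg => by
      simp only [demanded, mem_filter] at hg ⊢
      exact ⟨hg.1, b, hg.2⟩

omit [DecidableEq B] in
lemma welfare_le_card_demanded (hv : ∀ b g, v b g ≤ 1) (π : Finpartition (univ : Finset G)) :
    welfare v π ≤ #(demanded v univ) :=
  (sum_le_sum fun T _ => V1_le_card_demanded hv univ T).trans_eq (sum_card_demanded v π)

lemma card_demanded_le_two_mul_welfare (π : Finpartition (univ : Finset G))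
    (hπ : ∀ T ∈ π.parts, #(demanded v T) ≤ V1 v univ T + V2 v univ T) :
    #(demanded v univ) ≤ 2 * welfare v π :=
  calc #(demanded v univ) = ∑ T ∈ π.parts, #(demanded v T) := (sum_card_demanded v π).symm
    _ ≤ ∑ T ∈ π.parts, (V1 v univ T + V2 v univ T) := sum_le_sum hπ
    _ ≤ ∑ T ∈ π.parts, 2 * V1 v univ T :=
      sum_le_sum fun T _ => by have := V2_le_V1 v (Bb := univ) (T := T); omega
    _ = 2 * welfare v π := by rw [welfare, mul_sum]

omit [Fintype G] in
/-- Counting shows that some demanded good is valued by neither the top buyer nor the runner-up. -/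
lemma exists_isDetachable (hv : ∀ b g, v b g ≤ 1) {T : Finset G}
    (h : V1 v univ T + V2 v univ T < #(demanded v T)) : ∃ u, IsDetachable v T u := by
  obtain ⟨g, hg⟩ : (demanded v T).Nonempty := card_pos.1 (by omega)
  have : Nonempty B := let ⟨b, _⟩ := (mem_filter.1 hg).2; ⟨b⟩
  obtain ⟨b₁, -, hb₁⟩ := exists_mem_eq_sup univ univ_nonempty fun b => vsum v b T
  replace hb₁ : V1 v univ T = vsum v b₁ T := hb₁
  set X := demanded v T \ {g ∈ T | v b₁ g ≠ 0} with hXdef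
  have hX : V2 v univ T < #X := by
    have := le_card_sdiff {g ∈ T | v b₁ g ≠ 0} (demanded v T)
    rw [← vsum_eq_card_filter v (hv b₁), ← hXdef] at this
    omega
  obtain ⟨x, hx⟩ : X.Nonempty := card_pos.1 (by omega)
  simp only [X, demanded, mem_sdiff, mem_filter, not_and, not_not] at hx
  obtain ⟨⟨hxT, b₀, hb₀⟩, hx₁⟩ := hx
  have hb₀ : b₀ ∈ univ.erase b₁ := mem_erase.2 ⟨fun h => hb₀ (h ▸ hx₁ hxT), mem_univ b₀⟩
  obtain ⟨b₂, hb₂, hb₂top⟩ := exists_mem_eq_sup _ ⟨b₀, hb₀⟩ fun b => vsum v b T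
  have hV2 : V2 v univ T = vsum v b₂ T :=
    (V2_eq_V1_erase v (mem_univ b₁) hb₁.le).trans hb₂top
  obtain ⟨u, huX, hu₂⟩ := exists_mem_notMem_of_card_lt_card (s := {g ∈ T | v b₂ g ≠ 0}) (t := X)
    (by rwa [← vsum_eq_card_filter v (hv b₂), ← hV2])
  simp only [X, demanded, mem_sdiff, mem_filter, not_and, not_not] at huX hu₂
  obtain ⟨⟨huT, hdem⟩, hu₁⟩ := huX
  exact ⟨u, ⟨mem_filter.2 ⟨huT, hdem⟩, V1_le_V1_erase v (mem_univ b₁) hb₁.le (hu₁ huT),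
    V2_le_V2_erase v (mem_univ b₁) hb₁.le hb₂ hb₂top.le (hu₁ huT) (hu₂ huT)⟩⟩

lemma IsDetachable.exists_revenue_le_welfare_lt {π : Finpartition (univ : Finset G)}
    {T : Finset G} {u : G} (hT : T ∈ π.parts) (hu : IsDetachable v T u) :
    ∃ π', revenue v π ≤ revenue v π' ∧ welfare v π < welfare v π' := by
  obtain ⟨huT, b, hb⟩ := mem_filter.1 hu.mem_demanded
  have hu₁ : 1 ≤ V1 v univ {u} :=
    (show 1 ≤ vsum v b {u} by simp only [vsum, sum_singleton]; omega).trans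
      (vsum_le_V1 v (mem_univ b))
  have hne : (T.erase u).Nonempty := by
    rw [nonempty_iff_ne_empty]
    intro he
    have := (hu₁.trans (V1_mono_right v (singleton_subset_iff.2 huT))).trans hu.V1_le
    simp [he] at this
  refine ⟨π.refineAt T (Finpartition.splitOff huT hne), ?_, ?_⟩
  · have := π.sum_refineAt hT (Finpartition.splitOff huT hne) (V2 v univ)
    rw [Finpartition.sum_splitOff] at this
    unfold revenue
    linarith [hu.V2_le]
  · have := π.sum_refineAt hT (Finpartition.splitOff huT hne) (V1 v univ)
    rw [Finpartition.sum_splitOff] at this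
    unfold welfare
    linarith [hu.V1_le]

end

theorem exists_revmax_sw_ge_half_opt_general
    (v : B → G → ℕ) (hv : ∀ b g, v b g ≤ 1) :
    ∃ π : Finpartition (univ : Finset G),
      (∀ π' : Finpartition (univ : Finset G), rev1 v π' ≤ rev1 v π) ∧
      ∀ π' : Finpartition (univ : Finset G), (1 / 2 : ℚ) * SW1 v π' ≤ SW1 v π := by
  obtain ⟨π, hrev, hwel⟩ := Finite.exists_lex_max (revenue v) (welfare v)
  have hblock : ∀ T ∈ π.parts, #(demanded v T) ≤ V1 v univ T + V2 v univ T := by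
    intro T hT
    by_contra! h
    obtain ⟨u, hu⟩ := exists_isDetachable hv h
    obtain ⟨π', hrev', hwel'⟩ := hu.exists_revenue_le_welfare_lt hT
    exact (hwel π' fun ρ => (hrev ρ).trans hrev').not_gt hwel'
  have hhalf := card_demanded_le_two_mul_welfare π hblock
  refine ⟨π, fun π' => ?_, fun π' => ?_⟩
  · rw [rev1_eq, rev1_eq]
    gcongr
    exact_mod_cast hrev π'
  · have hle : (welfare v π' : ℚ) ≤ 2 * welfare v π := by
      exact_mod_cast (welfare_le_card_demanded hv π').trans hhalf
    rw [SW1_eq, SW1_eq]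
    calc 1 / 2 * ((Fintype.card G : ℚ)⁻¹ * welfare v π')
        = (Fintype.card G : ℚ)⁻¹ * (welfare v π' / 2) := by ring
      _ ≤ (Fintype.card G : ℚ)⁻¹ * welfare v π := by gcongr; linarith

/-- some revenue-maximizing partition attains at least half of
the optimal social welfare. -/
theorem exists_revmax_sw_ge_half_opt [Nonempty B] [Nonempty G]
    (v : B → G → ℕ) (hv : ∀ b g, v b g ≤ 1) :
    ∃ π : Finpartition (univ : Finset G),
      (∀ π' : Finpartition (univ : Finset G), rev1 v π' ≤ rev1 v π) ∧
      ∀ π' : Finpartition (univ : Finset G), (1 / 2 : ℚ) * SW1 v π' ≤ SW1 v π :=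
  exists_revmax_sw_ge_half_opt_general v hv
end

section
/- In the monopoly setting, if the trivial partition {G} is revenue-maximizing and moreover SW({G}) ≥ SW(π) for every revenue-maximizing partition π, then p^1 + p^2 ≤ 2·V̄1(B,G). -/
open Finset

variable {B G S : Type*} [Fintype B] [Fintype G] [Fintype S]
variable [DecidableEq B] [DecidableEq G] [DecidableEq S]

/-!
Let `b₁, b₂` be two buyers of highest value for `G`, so `V̄2(B,G) ≤ v_{b₁}(G), v_{b₂}(G)`, and let
`R` be the goods demanded by at most one buyer that `b₁` or `b₂` wants. Selling the goods outside
`R` one by one and `R` as a bundle still earns `V̄2(B,G)`: a good demanded twice fetches price 1,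
the other goods outside `R` are worthless to `b₁` and `b₂`, and the bundle `R` fetches at least
`min(v_{b₁}(R), v_{b₂}(R))`. So this partition is revenue-maximizing as well, and its welfare,
at least `#{demanded goods outside R} + V̄1(B,R)`, is at most `V̄1(B,G)`. Finally
`|R| ≤ 2·V̄1(B,R)`, `p² ≤ #{demanded goods outside R}` and `p¹ ≤ #{demanded goods outside R} + |R|`.
-/

set_option linter.unusedSectionVars false

lemma exists_finpartition_sum_parts_eq {α M : Type*} [Fintype α] [DecidableEq α]
    [AddCommMonoid M] (R : Finset α) :
    ∃ π : Finpartition (univ : Finset α), ∀ f : Finset α → M, f ∅ = 0 →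
      ∑ t ∈ π.parts, f t = ∑ a ∈ Rᶜ, f {a} + f R := by
  refine ⟨(⊥ : Finpartition Rᶜ).extendOfLE (subset_univ _), fun f hf => ?_⟩
  rcases R.eq_empty_or_nonempty with rfl | hR
  · rw [Finpartition.parts_extendOfLE_of_eq _ compl_empty]
    simp [hf]
  · have hlt : Rᶜ < univ := by
      obtain ⟨a, ha⟩ := hR
      exact ssubset_univ_iff.2 fun h => (mem_compl.1 (h ▸ mem_univ a : a ∈ Rᶜ)) ha
    rw [Finpartition.parts_extendOfLE_of_lt _ hlt, sum_insert, Finpartition.parts_bot, sum_map,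
      ← compl_eq_univ_sdiff, compl_compl, add_comm]
    · rfl
    · simpa using fun a ha h => ha (h ▸ mem_singleton_self a)

section Monopoly

variable (v : B → G → ℕ)

@[simp]
lemma V1_empty (Bb : Finset B) : V1 v Bb ∅ = 0 :=
  Nat.eq_zero_of_le_zero (Finset.sup_le fun b _ => by simp [vsum])

@[simp]
lemma V2_empty (Bb : Finset B) : V2 v Bb ∅ = 0 := by
  rw [V2]
  split_ifs <;> simp

lemma V2_le_V1_erase {Bb : Finset B} {b : B} (hb : b ∈ Bb) (Gb : Finset G) :
    V2 v Bb Gb ≤ V1 v (Bb.erase b) Gb := by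
  rw [V2, dif_pos ⟨b, hb⟩]
  exact inf'_le _ hb

lemma min_vsum_le_V2 {Bb : Finset B} {b b' : B} (hb : b ∈ Bb) (hb' : b' ∈ Bb)
    (hne : b ≠ b') (Gb : Finset G) :
    min (vsum v b Gb) (vsum v b' Gb) ≤ V2 v Bb Gb := by
  rw [V2, dif_pos ⟨b, hb⟩]
  refine le_inf' _ _ fun c _ => ?_
  have hle : ∀ {b''}, b'' ∈ Bb.erase c → vsum v b'' Gb ≤ V1 v (Bb.erase c) Gb :=
    fun h => le_sup (f := fun b => vsum v b Gb) h
  by_cases hc : c = b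
  · subst hc
    exact (min_le_right _ _).trans (hle (mem_erase.2 ⟨hne.symm, hb'⟩))
  · exact (min_le_left _ _).trans (hle (mem_erase.2 ⟨Ne.symm hc, hb⟩))

lemma V2_univ_of_subsingleton [Subsingleton B] (Gb : Finset G) :
    V2 v univ Gb = 0 := by
  rcases isEmpty_or_nonempty B with hB | ⟨⟨b⟩⟩
  · simp [V2]
  · refine Nat.eq_zero_of_le_zero ((V2_le_V1_erase v (mem_univ b) Gb).trans ?_)
    simp [V1, Subsingleton.elim _ b]

lemma exists_ne_V2_le_vsum [Nontrivial B] (Gb : Finset G) :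
    ∃ b₁ b₂, b₁ ≠ b₂ ∧ V2 v univ Gb ≤ vsum v b₁ Gb ∧ V2 v univ Gb ≤ vsum v b₂ Gb := by
  obtain ⟨b₁, -, hb₁⟩ := exists_max_image univ (fun b => vsum v b Gb) univ_nonempty
  obtain ⟨b, hb⟩ := exists_ne b₁
  obtain ⟨b₂, hb₂, hsup⟩ := exists_mem_eq_sup (univ.erase b₁) ⟨b, mem_erase.2 ⟨hb, mem_univ b⟩⟩
    (fun b => vsum v b Gb)
  have hV2 : V2 v univ Gb ≤ vsum v b₂ Gb := (V2_le_V1_erase v (mem_univ b₁) Gb).trans hsup.le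
  exact ⟨b₁, b₂, (ne_of_mem_erase hb₂).symm, hV2.trans (hb₁ b₂ (mem_univ _)), hV2⟩

lemma one_le_V1_singleton {Bb : Finset B} {g : G} (h : 1 ≤ ∑ b ∈ Bb, v b g) :
    1 ≤ V1 v Bb {g} := by
  obtain ⟨b, hb, hbg⟩ := exists_ne_zero_of_sum_ne_zero (Nat.one_le_iff_ne_zero.1 h)
  calc 1 ≤ vsum v b {g} := by simpa [vsum] using Nat.one_le_iff_ne_zero.2 hbg
    _ ≤ V1 v Bb {g} := le_sup (f := fun b => vsum v b {g}) hb

lemma one_le_V2_singleton {g : G} (hv : ∀ b, v b g ≤ 1) (h : 2 ≤ ∑ b, v b g) :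
    1 ≤ V2 v univ {g} := by
  rw [V2, dif_pos (nonempty_of_sum_ne_zero (f := (v · g)) (by omega))]
  refine le_inf' _ _ fun c _ => one_le_V1_singleton v ?_
  have := sum_erase_add univ (fun b => v b g) (mem_univ c)
  have := hv c
  omega

lemma card_filter_le_sum_V1_singleton (s : Finset G) :
    #{g ∈ s | 1 ≤ ∑ b, v b g} ≤ ∑ g ∈ s, V1 v univ {g} := by
  rw [card_filter]
  gcongr with g
  split_ifs with h
  exacts [one_le_V1_singleton v h, Nat.zero_le _]

lemma card_le_two_mul_V1 {Bb : Finset B} {b₁ b₂ : B} (hb₁ : b₁ ∈ Bb) (hb₂ : b₂ ∈ Bb)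
    {R : Finset G} (hR : ∀ g ∈ R, v b₁ g ≠ 0 ∨ v b₂ g ≠ 0) : #R ≤ 2 * V1 v Bb R := by
  have hsum : #R ≤ vsum v b₁ R + vsum v b₂ R := by
    rw [card_eq_sum_ones, vsum, vsum, ← sum_add_distrib]
    exact sum_le_sum fun g hg => by have := hR g hg; omega
  have h₁ : vsum v b₁ R ≤ V1 v Bb R := le_sup (f := fun b => vsum v b R) hb₁
  have h₂ : vsum v b₂ R ≤ V1 v Bb R := le_sup (f := fun b => vsum v b R) hb₂
  omega

lemma V2_univ_le_sum_compl_add_V2 {b₁ b₂ : B} (hne : b₁ ≠ b₂)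
    (h₁ : V2 v univ univ ≤ vsum v b₁ univ) (h₂ : V2 v univ univ ≤ vsum v b₂ univ)
    {R : Finset G} (hR : ∀ g ∉ R, v b₁ g ≤ V2 v univ {g} ∧ v b₂ g ≤ V2 v univ {g}) :
    V2 v univ univ ≤ ∑ g ∈ Rᶜ, V2 v univ {g} + V2 v univ R := by
  have hsplit : ∀ b, (∀ g ∉ R, v b g ≤ V2 v univ {g}) →
      vsum v b univ ≤ ∑ g ∈ Rᶜ, V2 v univ {g} + vsum v b R := fun b hb => by
    rw [vsum, vsum, ← sum_add_sum_compl R, add_comm]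
    gcongr with g hg
    exact hb g (mem_compl.1 hg)
  have h₁' := hsplit b₁ fun g hg => (hR g hg).1
  have h₂' := hsplit b₂ fun g hg => (hR g hg).2
  have := min_vsum_le_V2 v (mem_univ b₁) (mem_univ b₂) hne R
  omega

lemma exists_low_demand_block_V2_univ_le (hv : ∀ b g, v b g ≤ 1) :
    ∃ R : Finset G, (∀ g ∈ R, ∑ b, v b g < 2) ∧ #R ≤ 2 * V1 v univ R ∧
      V2 v univ univ ≤ ∑ g ∈ Rᶜ, V2 v univ {g} + V2 v univ R := by
  rcases subsingleton_or_nontrivial B with hB | hB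
  · exact ⟨∅, by simp, by simp, by simp [V2_univ_of_subsingleton]⟩
  obtain ⟨b₁, b₂, hne, h₁, h₂⟩ := exists_ne_V2_le_vsum v univ
  refine ⟨({g | ∑ b, v b g < 2 ∧ (v b₁ g ≠ 0 ∨ v b₂ g ≠ 0)} : Finset G),
    fun g hg => (mem_filter.1 hg).2.1,
    card_le_two_mul_V1 v (mem_univ b₁) (mem_univ b₂) fun g hg => (mem_filter.1 hg).2.2,
    V2_univ_le_sum_compl_add_V2 v hne h₁ h₂ fun g hg => ?_⟩
  simp only [mem_filter, mem_univ, true_and, not_and_or, not_lt, not_or, not_not] at hg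
  rcases hg with hg | ⟨hg₁, hg₂⟩
  · have := one_le_V2_singleton v (hv · g) hg
    exact ⟨(hv b₁ g).trans this, (hv b₂ g).trans this⟩
  · simp [hg₁, hg₂]

lemma pdem_one_add_pdem_two_le {R : Finset G} (hR : ∀ g ∈ R, ∑ b, v b g < 2) :
    pdem v 1 + pdem v 2 ≤ 2 * #{g ∈ Rᶜ | 1 ≤ ∑ b, v b g} + #R := by
  have h₁ : pdem v 1 ≤ #{g ∈ Rᶜ | 1 ≤ ∑ b, v b g} + #R := by
    refine (card_le_card fun g hg => ?_).trans (card_union_le _ _)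
    by_cases hgR : g ∈ R <;> simp_all
  have h₂ : pdem v 2 ≤ #{g ∈ Rᶜ | 1 ≤ ∑ b, v b g} := by
    refine card_le_card fun g hg => ?_
    have hg := (mem_filter.1 hg).2
    simp only [mem_filter, mem_compl]
    exact ⟨fun hgR => (hR g hgR).not_ge hg, by omega⟩
  omega

end Monopoly

lemma sum_V1_le_of_V2_le [Nonempty G] {v : B → G → ℕ}
    (htriv : ∀ π' : Finpartition (univ : Finset G), rev1 v π' ≤ rev1 v (trivPart G))
    (hbest : ∀ π : Finpartition (univ : Finset G),
        (∀ π' : Finpartition (univ : Finset G), rev1 v π' ≤ rev1 v π) →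
        SW1 v π ≤ SW1 v (trivPart G))
    (π : Finpartition (univ : Finset G)) (h : V2 v univ univ ≤ ∑ t ∈ π.parts, V2 v univ t) :
    ∑ t ∈ π.parts, V1 v univ t ≤ V1 v univ univ := by
  have hG : (0 : ℚ) < (Fintype.card G : ℚ)⁻¹ := by simp [Fintype.card_pos]
  have hπ : ∀ π', rev1 v π' ≤ rev1 v π := fun π' => (htriv π').trans <| by
    simp only [rev1, trivPart, Finpartition.indiscrete_parts, sum_singleton]
    gcongr
    exact_mod_cast h
  have hSW := hbest π hπ
  simp only [SW1, trivPart, Finpartition.indiscrete_parts, sum_singleton] at hSW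
  exact_mod_cast le_of_mul_le_mul_left hSW hG

theorem trivial_revmax_best_p1_p2_le_general [Nonempty G]
    (v : B → G → ℕ) (hv : ∀ b g, v b g ≤ 1)
    (htriv : ∀ π' : Finpartition (univ : Finset G), rev1 v π' ≤ rev1 v (trivPart G))
    (hbest : ∀ π : Finpartition (univ : Finset G),
        (∀ π' : Finpartition (univ : Finset G), rev1 v π' ≤ rev1 v π) →
        SW1 v π ≤ SW1 v (trivPart G)) :
    pdem v 1 + pdem v 2 ≤ 2 * V1 v (univ : Finset B) (univ : Finset G) := by
  obtain ⟨R, hRlow, hRcard, hrev⟩ := exists_low_demand_block_V2_univ_le v hv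
  obtain ⟨π, hπ⟩ := exists_finpartition_sum_parts_eq (M := ℕ) R
  have hwelfare := sum_V1_le_of_V2_le htriv hbest π <| by
    rwa [hπ _ (V2_empty v univ)]
  rw [hπ _ (V1_empty v univ)] at hwelfare
  have hdemanded := card_filter_le_sum_V1_singleton v Rᶜ
  have hcount := pdem_one_add_pdem_two_le v hRlow
  omega

/-- if the trivial partition is revenue-maximizing and welfare
maximal among revenue-maximizing partitions, then `p¹ + p² ≤ 2·V̄1(B,G)`. -/
theorem trivial_revmax_best_p1_p2_le [Nonempty B] [Nonempty G]
    (v : B → G → ℕ) (hv : ∀ b g, v b g ≤ 1)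
    (htriv : ∀ π' : Finpartition (univ : Finset G), rev1 v π' ≤ rev1 v (trivPart G))
    (hbest : ∀ π : Finpartition (univ : Finset G),
        (∀ π' : Finpartition (univ : Finset G), rev1 v π' ≤ rev1 v π) →
        SW1 v π ≤ SW1 v (trivPart G)) :
    pdem v 1 + pdem v 2 ≤ 2 * V1 v (univ : Finset B) (univ : Finset G) :=
  trivial_revmax_best_p1_p2_le_general v hv htriv hbest
end
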